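/- arXiv:math/0209080 — 3 statements merged into one kernel-verified Lean document; each statement's English description precedes it below -/
import Mathlib

section
/- For m ≥ 2, the digraph on m + 1 vertices with an edge from i to j iff i < m or j < m (i.e., adjacency matrix with an (m−1)×(m−1) all-ones block bordered by two full rows and columns except a 2×2 zero block in the corner) has spectral radius (m − 1 + √(m² + 6m − 7))/2. -/
/-!
Every vertex of `S = {1, …, m - 1}` is joined to every vertex, the remaining two only to `S`,
so the matrix has rank two. If `A v = z v` with `z ≠ 0` and `v ≠ 0`, the sums `T = ∑ v` and
`U = ∑_{i ∈ S} v i` satisfy `z T = a T + b U` and `z U = a T`, where `a = |S| = m - 1` and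
`b = |Sᶜ| = 2`; so `T ≠ 0` and `z² = a z + a b`. Conversely every nonzero root of this quadratic
is an eigenvalue. Its roots are real, and `‖z‖² ≤ a ‖z‖ + a b` bounds every eigenvalue by the
positive root.
-/

open Matrix Polynomial Finset

theorem Matrix.isRoot_charpoly_iff_exists_mulVec_eq_smul {n K : Type*} [Fintype n]
    [DecidableEq n] [Field K] (A : Matrix n n K) (z : K) :
    A.charpoly.IsRoot z ↔ ∃ v ≠ 0, A *ᵥ v = z • v := by
  rw [IsRoot, eval_charpoly, ← exists_mulVec_eq_zero_iff]
  simp [sub_mulVec, sub_eq_zero, eq_comm]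

theorem Finset.sum_ite_mem_const {n R : Type*} [Fintype n] [DecidableEq n] [NonAssocSemiring R]
    (S : Finset n) (a b : R) : ∑ i, (if i ∈ S then a else b) = #S * a + #Sᶜ * b := by
  rw [← sum_add_sum_compl S, sum_congr rfl fun i hi => if_pos hi,
    sum_congr rfl fun i hi => if_neg (mem_compl.1 hi)]
  simp

section Quadratic

variable {p q : ℝ}

theorem le_quadratic_root_of_sq_le {t : ℝ} (h : t ^ 2 ≤ p * t + q) :
    t ≤ (p + √(p ^ 2 + 4 * q)) / 2 := by
  have : 2 * t - p ≤ √(p ^ 2 + 4 * q) := Real.le_sqrt_of_sq_le (by nlinarith)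
  linarith

theorem quadratic_root_sq (hd : 0 ≤ p ^ 2 + 4 * q) :
    ((p + √(p ^ 2 + 4 * q)) / 2) ^ 2 = p * ((p + √(p ^ 2 + 4 * q)) / 2) + q := by
  linear_combination (1 / 4 : ℝ) * Real.sq_sqrt hd

theorem norm_le_quadratic_root_of_sq_eq (hp : 0 ≤ p) (hq : 0 ≤ q) {z : ℂ}
    (h : z ^ 2 = p * z + q) : ‖z‖ ≤ (p + √(p ^ 2 + 4 * q)) / 2 := by
  refine le_quadratic_root_of_sq_le ?_
  calc ‖z‖ ^ 2 = ‖(p : ℂ) * z + q‖ := by rw [← norm_pow, h]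
    _ ≤ p * ‖z‖ + q := by
      refine (norm_add_le _ _).trans ?_
      simp [abs_of_nonneg hp, abs_of_nonneg hq]

theorem isGreatest_norm_of_forall_ne_zero_iff_sq_eq {P : ℂ → Prop} (hp : 0 < p) (hq : 0 ≤ q)
    (hP : ∀ z ≠ 0, P z ↔ z ^ 2 = p * z + q) :
    IsGreatest {r : ℝ | ∃ z : ℂ, P z ∧ r = ‖z‖} ((p + √(p ^ 2 + 4 * q)) / 2) := by
  set ρ := (p + √(p ^ 2 + 4 * q)) / 2
  have hρ : 0 < ρ := by positivity
  constructor
  · refine ⟨ρ, (hP ρ (by exact_mod_cast hρ.ne')).2 ?_, by simp [abs_of_pos hρ]⟩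
    exact_mod_cast quadratic_root_sq (by positivity)
  · rintro _ ⟨z, hz, rfl⟩
    rcases eq_or_ne z 0 with rfl | hz0
    · simpa using hρ.le
    exact norm_le_quadratic_root_of_sq_eq hp.le hq ((hP z hz0).1 hz)

end Quadratic

section CompleteSplit

variable {n : Type*} [Fintype n] [DecidableEq n]

/-- The adjacency matrix of the complete split graph with clique `S` and independent set `Sᶜ`,
with a loop at every vertex of `S`. -/
def completeSplitMatrix (R : Type*) [Zero R] [One R] (S : Finset n) : Matrix n n R :=
  of fun i j => if i ∈ S ∨ j ∈ S then 1 else 0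

theorem completeSplitMatrix_mulVec_apply {R : Type*} [NonAssocSemiring R] (S : Finset n)
    (v : n → R) (i : n) :
    (completeSplitMatrix R S *ᵥ v) i = if i ∈ S then ∑ j, v j else ∑ j ∈ S, v j := by
  by_cases hi : i ∈ S <;> simp [completeSplitMatrix, mulVec, dotProduct, hi, sum_ite_mem]

variable {K : Type*} [Field K] {S : Finset n} {z : K}

theorem sq_eq_of_completeSplitMatrix_mulVec_eq_smul {v : n → K} (hv : v ≠ 0) (hz : z ≠ 0)
    (h : completeSplitMatrix K S *ᵥ v = z • v) : z ^ 2 = #S * z + #S * #Sᶜ := by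
  set T := ∑ j, v j
  set U := ∑ j ∈ S, v j
  have hrow (i : n) : z * v i = if i ∈ S then T else U := by
    rw [← completeSplitMatrix_mulVec_apply, h, Pi.smul_apply, smul_eq_mul]
  have hT : z * T = #S * T + #Sᶜ * U := by
    rw [mul_sum, sum_congr rfl fun i _ => hrow i, sum_ite_mem_const]
  have hU : z * U = #S * T := by
    rw [mul_sum, sum_congr rfl fun i hi => (hrow i).trans (if_pos hi), sum_const, nsmul_eq_mul]
  have hT0 : T ≠ 0 := by
    intro hT0
    have hU0 : U = 0 := by simpa [hT0, hz] using hU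
    exact hv <| funext fun i => by simpa [hT0, hU0, hz] using hrow i
  refine mul_right_cancel₀ hT0 ?_
  linear_combination z * hT + (#Sᶜ : K) * hU

theorem completeSplitMatrix_mulVec_eq_smul_of_sq_eq (h : z ^ 2 = #S * z + #S * #Sᶜ) :
    completeSplitMatrix K S *ᵥ (fun i => if i ∈ S then z else (#S : K)) =
      z • fun i => if i ∈ S then z else (#S : K) := by
  ext i
  rw [completeSplitMatrix_mulVec_apply, sum_ite_mem_const, sum_congr rfl fun i hi => if_pos hi,
    sum_const, nsmul_eq_mul]
  by_cases hi : i ∈ S <;> simp only [hi, if_true, if_false, Pi.smul_apply, smul_eq_mul]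
  · linear_combination -h
  · ring

theorem isRoot_charpoly_completeSplitMatrix_iff (hz : z ≠ 0) :
    (completeSplitMatrix K S).charpoly.IsRoot z ↔ z ^ 2 = #S * z + #S * #Sᶜ := by
  rw [isRoot_charpoly_iff_exists_mulVec_eq_smul]
  refine ⟨fun ⟨v, hv, h⟩ => sq_eq_of_completeSplitMatrix_mulVec_eq_smul hv hz h, fun h => ?_⟩
  refine ⟨_, ?_, completeSplitMatrix_mulVec_eq_smul_of_sq_eq h⟩
  obtain ⟨i, hi⟩ : S.Nonempty := by
    by_contra hS
    simp_all [not_nonempty_iff_eq_empty.1 hS]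
  exact fun h0 => hz <| by simpa [hi] using congrFun h0 i

end CompleteSplit

/-- For `m ≥ 2`, the digraph on `m + 1` vertices `{1,…,m+1}` with an edge `i → j` iff
`i < m` or `j < m` (here 0-indexed: `i + 1 < m ∨ j + 1 < m`) has spectral radius
`(m − 1 + √(m² + 6m − 7))/2`. -/
theorem spectralRadius_friedland_extremal (m : ℕ) (hm : 2 ≤ m)
    (M : Matrix (Fin (m + 1)) (Fin (m + 1)) ℂ)
    (hM : ∀ i j, M i j = if i.1 + 1 < m ∨ j.1 + 1 < m then 1 else 0) :
    IsGreatest {r : ℝ | ∃ z : ℂ, M.charpoly.IsRoot z ∧ r = ‖z‖}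
      (((m : ℝ) - 1 + Real.sqrt ((m : ℝ) ^ 2 + 6 * m - 7)) / 2) := by
  set S : Finset (Fin (m + 1)) := {i | (i : ℕ) < m - 1}
  have hMS : M = completeSplitMatrix ℂ S := by
    ext i j
    simp only [hM, completeSplitMatrix, of_apply, S, mem_filter, mem_univ, true_and,
      Nat.lt_sub_iff_add_lt]
  have hS : #S = m - 1 := by
    simp only [S, Fin.card_filter_val_lt]
    exact min_eq_right (by omega)
  have hSc : #Sᶜ = 2 := by
    rw [card_compl, hS, Fintype.card_fin]
    omega
  have hm' : (2 : ℝ) ≤ m := by exact_mod_cast hm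
  rw [show (m : ℝ) ^ 2 + 6 * m - 7 = ((m : ℝ) - 1) ^ 2 + 4 * (2 * ((m : ℝ) - 1)) by ring]
  refine isGreatest_norm_of_forall_ne_zero_iff_sq_eq (by linarith) (by linarith) fun z hz => ?_
  rw [hMS, isRoot_charpoly_completeSplitMatrix_iff hz, hS, hSc, Nat.cast_sub (by omega)]
  push_cast
  ring_nf
end

section
/- Let M be a (0,1) square matrix with exactly k = m² + ℓ ones, where 1 ≤ ℓ ≤ 2m. Then the spectral radius of M is at most (m + √(m² + 2ℓ))/2. -/
/-!
Take an eigenvector `v` for `z` and put `u = |v|`. Since `M ≥ 0`, `|z| ‖u‖² ≤ uᵀ M u`, the sum of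
`u i * u j` over the set `S` of ones of `M`, so it suffices to bound that sum by the constant
times `‖u‖²` for every `u ≥ 0`.

Let `T` index the `m` largest entries of `u`. A pair `(i, j) ∈ S` with `i, j ∉ T` can be traded
for a pair of `(T ∪ {i}) × (T ∪ {j})` not in `S`, which exists as `#S ≤ m² + 2m < (m + 1)²`;
this does not decrease the sum, so we may assume every pair of `S` meets `T`. Cauchy–Schwarz on the parts
of `S` in `T × T`, `T × Tᶜ` and `Tᶜ × T` bounds the sum by `√b x² + √(2 (#S - b)) x y`, where
`x² + y² = ‖u‖²` and `b ≤ m²` is the number of pairs in `T × T`. The top eigenvalue of this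
quadratic form is `(√b + √(2 #S - b)) / 2`, which is increasing in `b` as long as `b ≤ #S`.
-/

open Matrix Finset

namespace Friedland

variable {ι : Type*}

/-- `pairSum w S = wᵀ A w` for the `(0,1)`-matrix `A` with support `S`. -/
def pairSum (w : ι → ℝ) (S : Finset (ι × ι)) : ℝ := ∑ p ∈ S, w p.1 * w p.2

theorem pairSum_le_sqrt_card_mul (w : ι → ℝ) {S : Finset (ι × ι)} {A B : Finset ι}
    (hS : S ⊆ A ×ˢ B) :
    pairSum w S ≤ √(#S : ℝ) * √(∑ i ∈ A, w i ^ 2) * √(∑ j ∈ B, w j ^ 2) := by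
  have hsq : ∑ p ∈ S, (w p.1 * w p.2) ^ 2 ≤ (∑ i ∈ A, w i ^ 2) * ∑ j ∈ B, w j ^ 2 :=
    calc ∑ p ∈ S, (w p.1 * w p.2) ^ 2
        ≤ ∑ p ∈ A ×ˢ B, (w p.1 * w p.2) ^ 2 :=
          sum_le_sum_of_subset_of_nonneg hS fun _ _ _ => sq_nonneg _
      _ = (∑ i ∈ A, w i ^ 2) * ∑ j ∈ B, w j ^ 2 := by
          simp only [sum_mul_sum, sum_product, mul_pow]
  have hcs : pairSum w S ^ 2 ≤ #S * ((∑ i ∈ A, w i ^ 2) * ∑ j ∈ B, w j ^ 2) :=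
    sq_sum_le_card_mul_sum_sq.trans (by gcongr)
  calc pairSum w S ≤ |pairSum w S| := le_abs_self _
    _ ≤ √(#S * ((∑ i ∈ A, w i ^ 2) * ∑ j ∈ B, w j ^ 2)) := Real.abs_le_sqrt hcs
    _ = _ := by rw [Real.sqrt_mul (by positivity), Real.sqrt_mul (by positivity), mul_assoc]

theorem exists_card_eq_forall_le [Fintype ι] [DecidableEq ι] {α : Type*} [LinearOrder α]
    (w : ι → α) {m : ℕ} (hm : m ≤ Fintype.card ι) :
    ∃ T : Finset ι, #T = m ∧ ∀ a ∈ T, ∀ j ∉ T, w j ≤ w a := by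
  induction m with
  | zero => exact ⟨∅, card_empty, by simp⟩
  | succ m ih =>
    obtain ⟨T, hT, hTw⟩ := ih (by omega)
    have hne : Tᶜ.Nonempty := by rw [← card_pos, card_compl]; omega
    obtain ⟨j, hj, hjmax⟩ := Tᶜ.exists_max_image w hne
    have hjT : j ∉ T := mem_compl.mp hj
    refine ⟨insert j T, by rw [card_insert_of_notMem hjT, hT], fun a ha k hk => ?_⟩
    rw [mem_insert, not_or] at hk
    rcases mem_insert.mp ha with rfl | ha
    · exact hjmax k (mem_compl.mpr hk.2)
    · exact hTw a ha k hk.2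

section Exchange

variable [DecidableEq ι] {w : ι → ℝ} {T : Finset ι}

theorem exists_touching_notMem (hw : ∀ i, 0 ≤ w i) (hT : ∀ a ∈ T, ∀ j ∉ T, w j ≤ w a)
    {S : Finset (ι × ι)} (hS : #S < (#T + 1) ^ 2) {i j : ι} (hij : (i, j) ∈ S) (hi : i ∉ T)
    (hj : j ∉ T) : ∃ c ∉ S, (c.1 ∈ T ∨ c.2 ∈ T) ∧ w i * w j ≤ w c.1 * w c.2 := by
  have hD : #S < #(insert i T ×ˢ insert j T) := by
    rwa [card_product, card_insert_of_notMem hi, card_insert_of_notMem hj, ← sq]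
  obtain ⟨c, hcD, hcS⟩ := not_subset.mp fun h => (card_le_card h).not_gt hD
  obtain ⟨hc1, hc2⟩ := mem_product.mp hcD
  have hle : ∀ {k l}, l ∉ T → k ∈ insert l T → w l ≤ w k := fun hl hk =>
    (mem_insert.mp hk).elim (fun h => h ▸ le_rfl) fun h => hT _ h _ hl
  refine ⟨c, hcS, ?_, mul_le_mul (hle hi hc1) (hle hj hc2) (hw j) (hw c.1)⟩
  by_contra! h
  rw [mem_insert, or_iff_left h.1] at hc1
  rw [mem_insert, or_iff_left h.2] at hc2
  exact hcS ((Prod.ext hc1 hc2 : c = (i, j)) ▸ hij)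

theorem exists_touching_pairSum_le (hw : ∀ i, 0 ≤ w i)
    (hT : ∀ a ∈ T, ∀ j ∉ T, w j ≤ w a) {S : Finset (ι × ι)} (hS : #S < (#T + 1) ^ 2) :
    ∃ S' : Finset (ι × ι), #S' = #S ∧ (∀ p ∈ S', p.1 ∈ T ∨ p.2 ∈ T) ∧
      pairSum w S ≤ pairSum w S' := by
  obtain ⟨n, hn⟩ : ∃ n, #(S.filter fun p => p.1 ∉ T ∧ p.2 ∉ T) = n := ⟨_, rfl⟩
  induction n generalizing S with
  | zero =>
    refine ⟨S, rfl, fun p hp => ?_, le_rfl⟩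
    rw [card_eq_zero, filter_eq_empty_iff] at hn
    by_contra h
    exact hn hp (not_or.mp h)
  | succ n ih =>
    have hne : (S.filter fun p => p.1 ∉ T ∧ p.2 ∉ T).Nonempty := by
      rw [← card_pos, hn]
      exact n.succ_pos
    obtain ⟨⟨i, j⟩, hij⟩ := hne
    obtain ⟨hijS, hi, hj⟩ := mem_filter.mp hij
    obtain ⟨c, hcS, hcT, hc⟩ := exists_touching_notMem hw hT hS hijS hi hj
    have hcS' : c ∉ S.erase (i, j) := fun h => hcS (mem_of_mem_erase h)
    have hcard : #(insert c (S.erase (i, j))) = #S := by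
      rw [card_insert_of_notMem hcS', card_erase_add_one hijS]
    have hbad : #((insert c (S.erase (i, j))).filter fun p => p.1 ∉ T ∧ p.2 ∉ T) = n := by
      rw [filter_insert, if_neg (by tauto), filter_erase, card_erase_of_mem hij, hn,
        Nat.add_sub_cancel]
    have hsum : pairSum w S ≤ pairSum w (insert c (S.erase (i, j))) := by
      rw [pairSum, pairSum, sum_insert hcS', ← add_sum_erase _ _ hijS]
      exact add_le_add_left hc _
    obtain ⟨S', hS'card, hS'T, hS'sum⟩ := ih (hcard ▸ hS) hbad
    exact ⟨S', hS'card.trans hcard, hS'T, hsum.trans hS'sum⟩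

end Exchange

/-- `(s + √(s² + β²)) / 2` is the top eigenvalue of `!![s, β / 2; β / 2, 0]`. -/
theorem mul_sq_add_mul_mul_le (s β a c : ℝ) :
    s * a ^ 2 + β * (a * c) ≤ (s + √(s ^ 2 + β ^ 2)) / 2 * (a ^ 2 + c ^ 2) := by
  have hR := Real.sq_sqrt (by positivity : 0 ≤ s ^ 2 + β ^ 2)
  have hCS : (s * (a ^ 2 - c ^ 2) + β * (2 * a * c)) ^ 2 ≤
      (√(s ^ 2 + β ^ 2) * (a ^ 2 + c ^ 2)) ^ 2 := by
    rw [mul_pow, hR]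
    nlinarith [sq_nonneg (s * (2 * a * c) - β * (a ^ 2 - c ^ 2))]
  nlinarith [abs_le_of_sq_le_sq' hCS (by positivity)]

theorem sqrt_add_sqrt_sub_le {a b C : ℝ} (hb : 0 ≤ b) (hba : b ≤ a) (haC : 2 * a ≤ C) :
    √b + √(C - b) ≤ √a + √(C - a) := by
  have h1 := Real.sq_sqrt hb
  have h2 := Real.sq_sqrt (hb.trans hba)
  have h3 := Real.sq_sqrt (by linarith : 0 ≤ C - b)
  have h4 := Real.sq_sqrt (by linarith : 0 ≤ C - a)
  have h5 : √b ≤ √a := Real.sqrt_le_sqrt hba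
  have h6 : √a ≤ √(C - a) := Real.sqrt_le_sqrt (by linarith)
  have h7 : √(C - a) ≤ √(C - b) := Real.sqrt_le_sqrt (by linarith)
  nlinarith [Real.sqrt_nonneg b]

theorem sqrt_add_sqrt_le_sqrt_two_mul {p q : ℝ} (hp : 0 ≤ p) (hq : 0 ≤ q) :
    √p + √q ≤ √(2 * (p + q)) := by
  rw [Real.le_sqrt (by positivity) (by positivity), add_sq, Real.sq_sqrt hp, Real.sq_sqrt hq]
  nlinarith [sq_nonneg (√p - √q), Real.sq_sqrt hp, Real.sq_sqrt hq]

theorem pairSum_le_of_forall_touching [Fintype ι] [DecidableEq ι] (w : ι → ℝ) {T : Finset ι}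
    {S : Finset (ι × ι)} (hS : ∀ p ∈ S, p.1 ∈ T ∨ p.2 ∈ T) :
    pairSum w S ≤
      (√(#(S ∩ T ×ˢ T)) + √(2 * #S - #(S ∩ T ×ˢ T))) / 2 * ∑ i, w i ^ 2 := by
  set SB := (S.filter (·.1 ∈ T)).filter (·.2 ∈ T)
  set SR := (S.filter (·.1 ∈ T)).filter (·.2 ∉ T)
  set SC := S.filter (·.1 ∉ T)
  have hSB : S ∩ T ×ˢ T = SB := by ext; simp [SB, and_assoc]
  have hsum : pairSum w S = pairSum w SB + pairSum w SR + pairSum w SC := by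
    simp only [pairSum, SB, SR, SC, sum_filter_add_sum_filter_not]
  have hcard : (#S : ℝ) = #SB + #SR + #SC := by
    simp only [SB, SR, SC]
    rw_mod_cast [card_filter_add_card_filter_not, card_filter_add_card_filter_not]
  set x := ∑ i ∈ T, w i ^ 2
  set y := ∑ i ∈ Tᶜ, w i ^ 2
  have hxy : x + y = ∑ i, w i ^ 2 := sum_add_sum_compl T _
  have hB : pairSum w SB ≤ √(#SB) * √x * √x :=
    pairSum_le_sqrt_card_mul w fun p hp => by simp_all [SB]
  have hR : pairSum w SR ≤ √(#SR) * √x * √y :=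
    pairSum_le_sqrt_card_mul w fun p hp => by simp_all [SR]
  have hC : pairSum w SC ≤ √(#SC) * √y * √x :=
    pairSum_le_sqrt_card_mul w fun p hp => by
      simp only [SC, mem_filter] at hp
      simpa [hp.2] using hS p hp.1
  have hRC : √(#SR) + √(#SC) ≤ √(2 * (#SR + #SC)) :=
    sqrt_add_sqrt_le_sqrt_two_mul (Nat.cast_nonneg _) (Nat.cast_nonneg _)
  have hsq : √(#SB) ^ 2 + √(2 * (#SR + #SC)) ^ 2 = 2 * #S - #SB := by
    rw [Real.sq_sqrt (by positivity), Real.sq_sqrt (by positivity), hcard]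
    ring
  calc pairSum w S ≤ √(#SB) * √x ^ 2 + (√(#SR) + √(#SC)) * (√x * √y) := by
        rw [hsum]; linarith
    _ ≤ √(#SB) * √x ^ 2 + √(2 * (#SR + #SC)) * (√x * √y) := by gcongr
    _ ≤ (√(#SB) + √(2 * #S - #SB)) / 2 * (√x ^ 2 + √y ^ 2) := by
        rw [← hsq]; exact mul_sq_add_mul_mul_le _ _ _ _
    _ = _ := by
        rw [Real.sq_sqrt (sum_nonneg fun _ _ => sq_nonneg _),
          Real.sq_sqrt (sum_nonneg fun _ _ => sq_nonneg _), hxy, hSB]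

theorem pairSum_le [Fintype ι] [DecidableEq ι] {w : ι → ℝ} (hw : ∀ i, 0 ≤ w i) {m ℓ : ℕ}
    (hℓ : ℓ ≤ 2 * m) {S : Finset (ι × ι)} (hS : #S = m ^ 2 + ℓ) :
    pairSum w S ≤ (m + √(m ^ 2 + 2 * ℓ)) / 2 * ∑ i, w i ^ 2 := by
  have hm : m ≤ Fintype.card ι := by
    have := card_le_univ S
    rw [Fintype.card_prod, hS] at this
    nlinarith
  obtain ⟨T, hT, hTw⟩ := exists_card_eq_forall_le w hm
  obtain ⟨S', hS'card, hS'T, hsum⟩ :=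
    exists_touching_pairSum_le hw hTw (by rw [hS, hT]; nlinarith)
  have hb : (#(S' ∩ T ×ˢ T) : ℝ) ≤ (m : ℝ) ^ 2 := by
    exact_mod_cast (card_le_card inter_subset_right).trans (by rw [card_product, hT, sq])
  calc pairSum w S ≤ pairSum w S' := hsum
    _ ≤ (√(#(S' ∩ T ×ˢ T)) + √(2 * #S' - #(S' ∩ T ×ˢ T))) / 2 * ∑ i, w i ^ 2 :=
        pairSum_le_of_forall_touching w hS'T
    _ ≤ (√((m : ℝ) ^ 2) + √(2 * #S' - (m : ℝ) ^ 2)) / 2 * ∑ i, w i ^ 2 := by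
        gcongr ?_ / _ * _
        refine sqrt_add_sqrt_sub_le (Nat.cast_nonneg _) hb ?_
        rw [hS'card, hS]
        push_cast
        linarith [(Nat.cast_nonneg ℓ : (0 : ℝ) ≤ ℓ)]
    _ = (m + √(m ^ 2 + 2 * ℓ)) / 2 * ∑ i, w i ^ 2 := by
        rw [Real.sqrt_sq (Nat.cast_nonneg m), hS'card, hS]
        push_cast
        ring_nf

theorem norm_mul_sum_sq_le [Fintype ι] {A : Matrix ι ι ℝ} (hA : ∀ i j, 0 ≤ A i j) {z : ℂ}
    {v : ι → ℂ} (hv : A.map (↑) *ᵥ v = z • v) :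
    ‖z‖ * ∑ i, ‖v i‖ ^ 2 ≤ ∑ i, ∑ j, A i j * (‖v i‖ * ‖v j‖) := by
  have hrow : ∀ i, ‖z‖ * ‖v i‖ ≤ ∑ j, A i j * ‖v j‖ := fun i =>
    calc ‖z‖ * ‖v i‖ = ‖∑ j, (A i j : ℂ) * v j‖ := by
          rw [← norm_mul, ← smul_eq_mul, ← Pi.smul_apply, ← hv]
          rfl
      _ ≤ ∑ j, ‖(A i j : ℂ) * v j‖ := norm_sum_le _ _
      _ = ∑ j, A i j * ‖v j‖ := by simp [abs_of_nonneg (hA i _)]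
  calc ‖z‖ * ∑ i, ‖v i‖ ^ 2 = ∑ i, ‖v i‖ * (‖z‖ * ‖v i‖) := by
        rw [mul_sum]
        exact sum_congr rfl fun _ _ => by ring
    _ ≤ ∑ i, ‖v i‖ * ∑ j, A i j * ‖v j‖ :=
        sum_le_sum fun i _ => mul_le_mul_of_nonneg_left (hrow i) (norm_nonneg _)
    _ = ∑ i, ∑ j, A i j * (‖v i‖ * ‖v j‖) := by
        simp only [mul_sum]
        exact sum_congr rfl fun _ _ => sum_congr rfl fun _ _ => by ring

theorem sum_sum_mul_eq_pairSum [Fintype ι] {M : Matrix ι ι ℝ}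
    (h01 : ∀ i j, M i j = 0 ∨ M i j = 1) (u : ι → ℝ) :
    ∑ i, ∑ j, M i j * (u i * u j) = pairSum u (univ.filter fun p : ι × ι => M p.1 p.2 = 1) := by
  rw [pairSum, sum_filter, ← univ_product_univ, sum_product]
  refine sum_congr rfl fun i _ => sum_congr rfl fun j _ => ?_
  rcases h01 i j with h | h <;> simp [h]

end Friedland

theorem Matrix.exists_mulVec_eq_smul_of_isRoot_charpoly {K n : Type*} [Field K] [Fintype n]
    [DecidableEq n] {A : Matrix n n K} {z : K} (h : A.charpoly.IsRoot z) :
    ∃ v : n → K, v ≠ 0 ∧ A *ᵥ v = z • v := by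
  rw [← mem_spectrum_iff_isRoot_charpoly, ← spectrum_toLin',
    ← Module.End.hasEigenvalue_iff_mem_spectrum] at h
  obtain ⟨v, hv⟩ := h.exists_hasEigenvector
  exact ⟨v, hv.2, hv.apply_eq_smul⟩

open Friedland

theorem friedland_spectral_bound_general (d m ℓ : ℕ) (hl2 : ℓ ≤ 2 * m)
    (M : Matrix (Fin d) (Fin d) ℝ) (h01 : ∀ i j, M i j = 0 ∨ M i j = 1)
    (hones : (Finset.univ.filter fun p : Fin d × Fin d => M p.1 p.2 = 1).card = m ^ 2 + ℓ) :
    ∀ z : ℂ, (M.map (Complex.ofReal)).charpoly.IsRoot z →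
      ‖z‖ ≤ ((m : ℝ) + Real.sqrt ((m : ℝ) ^ 2 + 2 * ℓ)) / 2 := by
  intro z hz
  obtain ⟨v, hv0, hv⟩ := exists_mulVec_eq_smul_of_isRoot_charpoly hz
  have hM : ∀ i j, 0 ≤ M i j := fun i j => by rcases h01 i j with h | h <;> simp [h]
  have hpos : 0 < ∑ i, ‖v i‖ ^ 2 := by
    obtain ⟨i, hi⟩ := Function.ne_iff.mp hv0
    exact sum_pos' (fun _ _ => by positivity) ⟨i, mem_univ _, pow_pos (norm_pos_iff.mpr hi) 2⟩
  refine le_of_mul_le_mul_right ?_ hpos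
  calc ‖z‖ * ∑ i, ‖v i‖ ^ 2 ≤ ∑ i, ∑ j, M i j * (‖v i‖ * ‖v j‖) := norm_mul_sum_sq_le hM hv
    _ = pairSum (‖v ·‖) (univ.filter fun p : Fin d × Fin d => M p.1 p.2 = 1) :=
        sum_sum_mul_eq_pairSum h01 _
    _ ≤ _ := pairSum_le (fun _ => norm_nonneg _) hl2 hones

/-- Friedland's bound: a `(0,1)` square matrix with exactly `k = m² + ℓ` ones,
`1 ≤ ℓ ≤ 2m`, has spectral radius at most `(m + √(m² + 2ℓ))/2`. -/
theorem friedland_spectral_bound (d m ℓ : ℕ) (hm : 1 ≤ m) (hl1 : 1 ≤ ℓ) (hl2 : ℓ ≤ 2 * m)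
    (M : Matrix (Fin d) (Fin d) ℝ) (h01 : ∀ i j, M i j = 0 ∨ M i j = 1)
    (hones : (Finset.univ.filter fun p : Fin d × Fin d => M p.1 p.2 = 1).card = m ^ 2 + ℓ) :
    ∀ z : ℂ, (M.map (Complex.ofReal)).charpoly.IsRoot z →
      ‖z‖ ≤ ((m : ℝ) + Real.sqrt ((m : ℝ) ^ 2 + 2 * ℓ)) / 2 :=
  friedland_spectral_bound_general d m ℓ hl2 M h01 hones
end

section
/- For m ≥ 1 and 1 ≤ ℓ ≤ 2m, set p = ⌊ℓ/2⌋, q = ⌈ℓ/2⌉. The polynomial t³ − m t² − p t + (mp − pq) has a real root ρ with m ≤ ρ and ρ ≤ (m + √(m² + 2ℓ))/2. -/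
/-- For `m ≥ 1`, `1 ≤ ℓ ≤ 2m`, `p = ⌊ℓ/2⌋`, `q = ⌈ℓ/2⌉`, the polynomial
`t³ − m t² − p t + (mp − pq)` has a real root `ρ` with `m ≤ ρ ≤ (m + √(m² + 2ℓ))/2`. -/
theorem exists_root_rho (m ℓ p q : ℕ) (hm : 1 ≤ m) (hl1 : 1 ≤ ℓ) (hl2 : ℓ ≤ 2 * m)
    (hp : p = ℓ / 2) (hq : q = (ℓ + 1) / 2) :
    ∃ ρ : ℝ, ρ ^ 3 - m * ρ ^ 2 - p * ρ + ((m : ℝ) * p - p * q) = 0 ∧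
      (m : ℝ) ≤ ρ ∧ ρ ≤ ((m : ℝ) + Real.sqrt ((m : ℝ) ^ 2 + 2 * ℓ)) / 2 := by
  set f : ℝ → ℝ := fun t => t ^ 3 - m * t ^ 2 - p * t + ((m : ℝ) * p - p * q) with hf
  set s : ℝ := Real.sqrt ((m : ℝ) ^ 2 + 2 * ℓ) with hsdef
  have hnn : (0 : ℝ) ≤ (m : ℝ) ^ 2 + 2 * ℓ := by positivity
  have hs2 : s ^ 2 = (m : ℝ) ^ 2 + 2 * ℓ := Real.sq_sqrt hnn
  have hs0 : 0 ≤ s := Real.sqrt_nonneg _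
  have hsm : (m : ℝ) ≤ s := by
    rw [hsdef]
    apply Real.le_sqrt' (by positivity) |>.mpr
    have : (1:ℝ) ≤ ℓ := by exact_mod_cast hl1
    nlinarith
  have hpq : (p : ℝ) + q = ℓ := by
    have : p + q = ℓ := by omega
    push_cast [← this]; ring
  have hpq' : (p : ℝ) ≤ q := by exact_mod_cast (by omega : p ≤ q)
  have hqm : (q : ℝ) ≤ m := by exact_mod_cast (by omega : q ≤ m)
  have hm' : (1 : ℝ) ≤ m := by exact_mod_cast hm
  set B : ℝ := ((m : ℝ) + s) / 2 with hB
  have hmB : (m : ℝ) ≤ B := by rw [hB]; linarith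
  have hB0 : 0 ≤ B := by linarith
  have hfm : f m ≤ 0 := by
    have : f m = -((p : ℝ) * q) := by rw [hf]; ring
    rw [this]
    have : 0 ≤ (p : ℝ) * q := by positivity
    linarith
  have hfB : 0 ≤ f B := by
    have hBsq : B ^ 2 = (m : ℝ) * B + ℓ / 2 := by
      rw [hB]; nlinarith [hs2]
    have hval : f B = B * (((q : ℝ) - p) / 2) + p * ((m : ℝ) - q) := by
      rw [hf]
      have : B ^ 3 = B * B ^ 2 := by ring
      simp only []
      nlinarith [hBsq, hpq]
    rw [hval]
    have h1 : 0 ≤ B * (((q : ℝ) - p) / 2) := by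
      apply mul_nonneg hB0; linarith
    have h2 : 0 ≤ (p : ℝ) * ((m : ℝ) - q) := by
      apply mul_nonneg (by positivity); linarith
    linarith
  have hcont : ContinuousOn f (Set.Icc (m : ℝ) B) := by
    apply Continuous.continuousOn; rw [hf]; fun_prop
  obtain ⟨ρ, hρmem, hρ0⟩ := intermediate_value_Icc hmB hcont ⟨hfm, hfB⟩
  exact ⟨ρ, hρ0, hρmem.1, hρmem.2⟩
end
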